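/- Let X be a complex Banach space, T a bounded linear operator on X, λ an eigenvalue of T, and p a positive integer. Assume (T − λI)^p has closed range and 0 < dim ker((T − λI)^p) = n ≤ m = dim ker((T* − λI)^p) < ∞ (i.e., T − λI is Fredholm of index ≤ 0). Let (e_1,…,e_n) be a basis of ker((T − λI)^p) and (e*_1,…,e*_m) a basis of ker((T* − λI)^p). Then ker((T − λI)^p) = ker((T − λI)^{p+1}) (i.e., T − λI has ascent at most p) if and only if the m×n Gram matrix G with entries G_{ji} = e*_j(e_i) has full column rank n. -/

import Mathlib

/-!
The ascent of `S = T - λI` is at most `p` exactly when `ker S^p ∩ range S^p = 0`. As `range S^p`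
is closed, Hahn–Banach identifies it with the common kernel of its annihilator
`ker (S*)^p = ker (T* - λI)^p`, i.e. of `e*_1, …, e*_m`. Since `(G c)_j = e*_j (∑ c_i e_i)`, the
kernel of `G` parametrises `ker S^p ∩ range S^p`, so `G` is injective iff that intersection is `0`.
-/

/-- The dual (transpose) operator `T* : X* → X*`, `T* f = f ∘ T`, of a bounded operator `T`
on a normed space `X`. -/
noncomputable def dualOp {X : Type*} [NormedAddCommGroup X] [NormedSpace ℂ X]
    (T : X →L[ℂ] X) : StrongDual ℂ X →L[ℂ] StrongDual ℂ X :=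
  (ContinuousLinearMap.compL ℂ X X ℂ).flip T

namespace Module.End

variable {K V : Type*} [DivisionRing K] [AddCommGroup V] [Module K V]

theorem ker_pow_eq_ker_pow_succ_iff_disjoint (f : End K V) {p : ℕ} (hp : 0 < p) :
    LinearMap.ker (f ^ p) = LinearMap.ker (f ^ (p + 1)) ↔
      Disjoint (LinearMap.ker (f ^ p)) (LinearMap.range (f ^ p)) := by
  rw [Submodule.disjoint_def]
  constructor
  · rintro h _ hx ⟨y, rfl⟩
    have hy : y ∈ LinearMap.ker (f ^ (p + p)) := by
      rwa [LinearMap.mem_ker, pow_add, Module.End.mul_apply]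
    rwa [← ker_pow_constant h p] at hy
  · intro h
    refine le_antisymm (by rw [pow_succ']; exact LinearMap.ker_le_ker_comp _ f) fun x hx => ?_
    obtain ⟨q, rfl⟩ := Nat.exists_eq_add_one_of_ne_zero hp.ne'
    refine h _ ?_ ⟨x, rfl⟩
    rw [LinearMap.mem_ker, ← Module.End.mul_apply, ← pow_add,
      show q + 1 + (q + 1) = q + (q + 1 + 1) by ring, pow_add, Module.End.mul_apply,
      LinearMap.mem_ker.mp hx, map_zero]

end Module.End

theorem Module.Basis.le_ker_iff {ι 𝕜 M : Type*} [Field 𝕜] [AddCommGroup M] [Module 𝕜 M]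
    {V : Submodule 𝕜 M} (b : Basis ι 𝕜 V) (φ : M →ₗ[𝕜] 𝕜) :
    V ≤ LinearMap.ker φ ↔ ∀ i, φ (b i) = 0 := by
  refine ⟨fun h i => h (b i).2, fun h x hx => ?_⟩
  have := b.ext (f₁ := φ ∘ₗ V.subtype) (f₂ := 0) h
  exact LinearMap.congr_fun this ⟨x, hx⟩

theorem Matrix.rank_eq_card_iff_injective_mulVec {m n R : Type*} [Field R] [Fintype n]
    (A : Matrix m n R) : A.rank = Fintype.card n ↔ Function.Injective A.mulVec := by
  rw [Matrix.mulVec_injective_iff, linearIndependent_iff_card_eq_finrank_span,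
    rank_eq_finrank_span_cols, eq_comm]
  rfl

theorem Module.Basis.rank_of_apply_eq_card_iff_disjoint {ι ι' 𝕜 M : Type*} [Field 𝕜] [Fintype ι]
    [AddCommGroup M] [Module 𝕜 M] {K : Submodule 𝕜 M} (e : Basis ι 𝕜 K)
    (φ : ι' → Module.Dual 𝕜 M) :
    (Matrix.of fun j i => φ j (e i)).rank = Fintype.card ι ↔
      Disjoint K (⨅ j, LinearMap.ker (φ j)) := by
  have hmulVec : (Matrix.of fun j i => φ j (e i)).mulVec =
      (LinearMap.pi φ).domRestrict K ∘ e.equivFun.symm := by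
    ext c j
    simp [Matrix.mulVec, dotProduct, mul_comm]
  rw [Matrix.rank_eq_card_iff_injective_mulVec, hmulVec, EquivLike.injective_comp,
    LinearMap.injective_domRestrict_iff, LinearMap.ker_pi]

theorem Submodule.mem_iff_forall_strongDual_of_isClosed {𝕜 X : Type*} [RCLike 𝕜]
    [NormedAddCommGroup X] [NormedSpace 𝕜 X] {R : Submodule 𝕜 X} (hR : IsClosed (R : Set X))
    {x : X} : x ∈ R ↔ ∀ f : StrongDual 𝕜 X, (∀ y ∈ R, f y = 0) → f x = 0 := by
  refine ⟨fun hx f hf => hf x hx, fun h => ?_⟩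
  have : IsClosed (R : Set X) := hR
  by_contra hx
  -- `X ⧸ R` is a normed space since `R` is closed, so its dual separates `x + R` from `0`.
  obtain ⟨g, hg⟩ := SeparatingDual.exists_ne_zero (R := 𝕜) (x := R.mkQ x)
    (by rwa [ne_eq, Submodule.mkQ_apply, Submodule.Quotient.mk_eq_zero])
  exact hg (h (g.comp R.mkQL) fun y hy => by
    simp [(Submodule.Quotient.mk_eq_zero R).2 hy])

section dualOp

variable {X : Type*} [NormedAddCommGroup X] [NormedSpace ℂ X]

theorem dualOp_apply (S : X →L[ℂ] X) (f : StrongDual ℂ X) (x : X) : dualOp S f x = f (S x) :=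
  rfl

theorem dualOp_pow (S : X →L[ℂ] X) (k : ℕ) : dualOp S ^ k = dualOp (S ^ k) := by
  induction k with
  | zero => rfl
  | succ k ih =>
    ext f x
    rw [pow_succ (dualOp S) k, mul_apply_eq_comp, ih, dualOp_apply, dualOp_apply,
      dualOp_apply, pow_succ' S k, mul_apply_eq_comp]

theorem dualOp_sub_smul_one (T : X →L[ℂ] X) (l : ℂ) : dualOp T - l • 1 = dualOp (T - l • 1) := by
  ext f x
  simp only [sub_apply, smul_apply, one_apply_eq_self, dualOp_apply, map_sub, map_smul]

theorem mem_ker_dualOp {S : X →L[ℂ] X} {f : StrongDual ℂ X} :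
    f ∈ LinearMap.ker (dualOp S : StrongDual ℂ X →ₗ[ℂ] StrongDual ℂ X) ↔ ∀ x, f (S x) = 0 :=
  ContinuousLinearMap.ext_iff

theorem mem_range_iff_forall_mem_ker_dualOp {S : X →L[ℂ] X}
    (hS : IsClosed (LinearMap.range (S : X →ₗ[ℂ] X) : Set X)) {x : X} :
    x ∈ LinearMap.range (S : X →ₗ[ℂ] X) ↔
      ∀ f ∈ LinearMap.ker (dualOp S : StrongDual ℂ X →ₗ[ℂ] StrongDual ℂ X), f x = 0 := by
  rw [Submodule.mem_iff_forall_strongDual_of_isClosed hS]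
  refine forall_congr' fun f => imp_congr_left ?_
  rw [mem_ker_dualOp]
  exact ⟨fun h y => h _ ⟨y, rfl⟩, by rintro h _ ⟨y, rfl⟩; exact h y⟩

end dualOp

theorem ascent_iff_gram_full_column_rank_general
    {X : Type*} [NormedAddCommGroup X] [NormedSpace ℂ X]
    (T : X →L[ℂ] X) (l : ℂ) (p n m : ℕ) (hp : 0 < p)
    (hclosed : IsClosed (LinearMap.range (((T - l • 1) ^ p : X →L[ℂ] X) : X →ₗ[ℂ] X) : Set X))
    (e : Module.Basis (Fin n) ℂ (LinearMap.ker (((T - l • 1) ^ p : X →L[ℂ] X) : X →ₗ[ℂ] X)))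
    (estar : Module.Basis (Fin m) ℂ (LinearMap.ker (((dualOp T - l • 1) ^ p : StrongDual ℂ X →L[ℂ] StrongDual ℂ X) :
      StrongDual ℂ X →ₗ[ℂ] StrongDual ℂ X)))
    (G : Matrix (Fin m) (Fin n) ℂ)
    (hG : G = Matrix.of fun j i => (estar j : StrongDual ℂ X) (e i : X)) :
    LinearMap.ker (((T - l • 1) ^ p : X →L[ℂ] X) : X →ₗ[ℂ] X) = LinearMap.ker (((T - l • 1) ^ (p + 1) : X →L[ℂ] X) : X →ₗ[ℂ] X) ↔
      G.rank = n := by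
  have hrange : LinearMap.range (((T - l • 1) ^ p : X →L[ℂ] X) : X →ₗ[ℂ] X) =
      ⨅ j, LinearMap.ker ((estar j : StrongDual ℂ X) : X →ₗ[ℂ] ℂ) := by
    ext x
    rw [mem_range_iff_forall_mem_ker_dualOp hclosed, Submodule.mem_iInf, ← dualOp_pow,
      ← dualOp_sub_smul_one]
    exact estar.le_ker_iff ((topDualPairing ℂ X).flip x)
  have hascent :=
    Module.End.ker_pow_eq_ker_pow_succ_iff_disjoint ((T - l • 1 : X →L[ℂ] X) : X →ₗ[ℂ] X) hp
  have hgram := e.rank_of_apply_eq_card_iff_disjoint fun j => (estar j : X →ₗ[ℂ] ℂ)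
  simp only [← ContinuousLinearMap.toLinearMap_pow] at hascent
  rw [Fintype.card_fin] at hgram
  rw [hascent, hrange, hG]
  exact hgram.symm

/-- Let `λ` be an eigenvalue of `T`, let `(T - λI)^p` have closed range and
`0 < dim ker (T - λI)^p = n ≤ m = dim ker (T* - λI)^p < ∞`.  Then `T - λI` has ascent at
most `p` (`ker (T - λI)^p = ker (T - λI)^(p+1)`) iff the `m × n` Gram matrix `G` has full
column rank `n`. -/
theorem ascent_iff_gram_full_column_rank
    {X : Type*} [NormedAddCommGroup X] [NormedSpace ℂ X] [CompleteSpace X]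
    (T : X →L[ℂ] X) (l : ℂ) (p n m : ℕ) (hp : 0 < p) (hn : 0 < n) (hnm : n ≤ m)
    (heig : LinearMap.ker ((T - l • 1 : X →L[ℂ] X) : X →ₗ[ℂ] X) ≠ ⊥)
    (hclosed : IsClosed (LinearMap.range (((T - l • 1) ^ p : X →L[ℂ] X) : X →ₗ[ℂ] X) : Set X))
    (e : Module.Basis (Fin n) ℂ (LinearMap.ker (((T - l • 1) ^ p : X →L[ℂ] X) : X →ₗ[ℂ] X)))
    (estar : Module.Basis (Fin m) ℂ (LinearMap.ker (((dualOp T - l • 1) ^ p : StrongDual ℂ X →L[ℂ] StrongDual ℂ X) :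
      StrongDual ℂ X →ₗ[ℂ] StrongDual ℂ X)))
    (G : Matrix (Fin m) (Fin n) ℂ)
    (hG : G = Matrix.of fun j i => (estar j : StrongDual ℂ X) (e i : X)) :
    LinearMap.ker (((T - l • 1) ^ p : X →L[ℂ] X) : X →ₗ[ℂ] X) = LinearMap.ker (((T - l • 1) ^ (p + 1) : X →L[ℂ] X) : X →ₗ[ℂ] X) ↔
      G.rank = n :=
  ascent_iff_gram_full_column_rank_general T l p n m hp hclosed e estar G hG
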